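/- arXiv:2003.03367 — 2 statements merged into one kernel-verified Lean document; each statement's English description precedes it below -/
import Mathlib

section
/- Let d ≥ 1, let ϑ ∈ ℤ^d be nonzero, and define the linear order ≺ on ℤ^d by: x ≺ y if and only if x·ϑ < y·ϑ, or x·ϑ = y·ϑ and x precedes y lexicographically. Let ν be a probability measure on {0,1}^{E^d}, the space of undirected nearest-neighbor edge configurations on ℤ^d with the product σ-algebra, invariant under all translations of ℤ^d. Then ν-almost surely, no infinite connected component of the open subgraph possesses a ≺-least element (a progenitor). -/
/-!
Mass transport. Let `E x p` be the event that the cluster of `x` is infinite and has progenitor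
`p`. By translation invariance `ν (E x p) = ν (E (x + z) (p + z))`, so the expected number of
vertices sending mass to `p`, `∑ x, ν (E x p)`, equals the expected mass sent out by `p`,
`∑ q, ν (E p q) = ν (⋃ q, E p q) ≤ 1`, the events `E p q` being disjoint. By Borel–Cantelli,
almost surely only finitely many `E x p` occur; yet on `E p p` the event `E x p` occurs for every
`x` in the infinite cluster of `p`. Hence `ν (E p p) = 0` for every `p`.
-/

open MeasureTheory

/-- Vertices of the `d`-dimensional lattice. -/
abbrev Vtx (d : ℕ) := Fin d → ℤ

/-- ℓ¹-distance on `ℤ^d`. -/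
def dist1 {d : ℕ} (x y : Vtx d) : ℤ := ∑ i, |x i - y i|

/-- Standard dot product on `ℤ^d`. -/
def dotZ {d : ℕ} (x y : Vtx d) : ℤ := ∑ i, x i * y i

/-- Lexicographic (strict) order on `ℤ^d`: compare by the first differing coordinate. -/
def LexLt {d : ℕ} (x y : Vtx d) : Prop :=
  ∃ i : Fin d, (∀ j : Fin d, j < i → x j = y j) ∧ x i < y i

/-- `x ≺ y`: `x·ϑ < y·ϑ`, or `x·ϑ = y·ϑ` and `x` precedes `y` lexicographically. -/
def Prec {d : ℕ} (ϑ x y : Vtx d) : Prop :=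
  dotZ x ϑ < dotZ y ϑ ∨ (dotZ x ϑ = dotZ y ϑ ∧ LexLt x y)

/-- An undirected nearest-neighbor edge configuration on `ℤ^d`. -/
abbrev UConfig (d : ℕ) := Sym2 (Vtx d) → Bool

/-- `x` and `y` are joined by an open edge of `ω`. -/
def OpenAdj {d : ℕ} (ω : UConfig d) (x y : Vtx d) : Prop :=
  dist1 x y = 1 ∧ ω s(x, y) = true

/-- Translation of an undirected configuration by `z`. -/
def shiftU {d : ℕ} (z : Vtx d) (ω : UConfig d) : UConfig d :=
  fun e => ω (e.map (· + z))

/-- Connectivity in the open subgraph. -/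
def Conn {d : ℕ} (ω : UConfig d) : Vtx d → Vtx d → Prop :=
  Relation.ReflTransGen (OpenAdj ω)

open Function

theorem tsum_apply_self_eq_tsum_self_apply {G M : Type*} [AddCommGroup G] [AddCommMonoid M]
    [TopologicalSpace M] (f : G → G → M)
    (hf : ∀ x y z, f (x + z) (y + z) = f x y) (a : G) :
    ∑' x, f x a = ∑' y, f a y := by
  calc ∑' x, f x a = ∑' x, f a (a + a - x) := by
        refine tsum_congr fun x => ?_
        simpa [add_sub_cancel, add_sub_assoc] using (hf x a (a - x)).symm
    _ = ∑' y, f a y := (Equiv.subLeft (a + a)).tsum_eq (f a)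

theorem Set.infinite_iff_forall_exists_notMem_finset {α : Type*} {s : Set α} :
    s.Infinite ↔ ∀ F : Finset α, ∃ a ∈ s, a ∉ F :=
  ⟨Set.Infinite.exists_notMem_finset, fun h hs =>
    let ⟨_, ha, haF⟩ := h hs.toFinset
    haF (hs.mem_toFinset.2 ha)⟩

section Lattice
variable {d : ℕ}

lemma dist1_comm (x y : Vtx d) : dist1 x y = dist1 y x := by
  simp only [dist1, abs_sub_comm]

lemma dist1_add_right (x y z : Vtx d) : dist1 (x + z) (y + z) = dist1 x y := by
  simp only [dist1, Pi.add_apply, add_sub_add_right_eq_sub]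

lemma OpenAdj.symm {ω : UConfig d} {x y : Vtx d} (h : OpenAdj ω x y) : OpenAdj ω y x :=
  ⟨dist1_comm x y ▸ h.1, Sym2.eq_swap ▸ h.2⟩

lemma Conn.symm {ω : UConfig d} {x y : Vtx d} (h : Conn ω x y) : Conn ω y x :=
  have : Std.Symm (OpenAdj ω) := ⟨fun _ _ => OpenAdj.symm⟩
  Std.Symm.symm (r := Relation.ReflTransGen (OpenAdj ω)) _ _ h

lemma openAdj_shiftU (z : Vtx d) (ω : UConfig d) (a b : Vtx d) :
    OpenAdj (shiftU z ω) a b ↔ OpenAdj ω (a + z) (b + z) := by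
  rw [OpenAdj, OpenAdj, shiftU, Sym2.map_mk, dist1_add_right]

lemma conn_shiftU (z : Vtx d) (ω : UConfig d) (a b : Vtx d) :
    Conn (shiftU z ω) a b ↔ Conn ω (a + z) (b + z) := by
  refine ⟨fun h => Relation.ReflTransGen.lift (· + z) (fun p q => (openAdj_shiftU z ω p q).1)
    a b h, fun h => ?_⟩
  simpa [Conn, onFun] using Relation.ReflTransGen.lift (· - z)
    (fun p q hpq => (openAdj_shiftU z ω _ _).2 (by simpa using hpq)) _ _ h

lemma measurable_openAdj (x y : Vtx d) : Measurable fun ω : UConfig d => OpenAdj ω x y :=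
  measurable_const.and <| measurableSet_setOfPred.mp <|
    measurableSet_eq_fun (measurable_pi_apply s(x, y)) measurable_const

lemma measurable_isChain (x : Vtx d) (l : List (Vtx d)) :
    Measurable fun ω : UConfig d => (x :: l).IsChain (OpenAdj ω) := by
  induction l generalizing x with
  | nil => simp only [List.isChain_singleton]; exact measurable_const
  | cons y l ih =>
    simp only [List.isChain_cons_cons]
    exact (measurable_openAdj x y).and (ih y)

lemma measurable_conn (x y : Vtx d) : Measurable fun ω : UConfig d => Conn ω x y := by
  have : (fun ω : UConfig d => Conn ω x y) = fun ω => ∃ l : List (Vtx d),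
      (x :: l).IsChain (OpenAdj ω) ∧ (x :: l).getLast (List.cons_ne_nil x l) = y := by
    ext ω
    exact ⟨List.exists_isChain_cons_of_relationReflTransGen,
      fun ⟨l, hl, hy⟩ => List.relationReflTransGen_of_exists_isChain_cons l hl hy⟩
  rw [this]
  exact Measurable.exists fun l => (measurable_isChain x l).and measurable_const

lemma dotZ_add_left (x y z : Vtx d) : dotZ (x + z) y = dotZ x y + dotZ z y := by
  simp only [dotZ, Pi.add_apply, add_mul, Finset.sum_add_distrib]

lemma lexLt_add_right_iff (x y z : Vtx d) : LexLt (x + z) (y + z) ↔ LexLt x y := by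
  simp only [LexLt, Pi.add_apply, add_left_inj, add_lt_add_iff_right]

lemma prec_add_right_iff (ϑ x y z : Vtx d) : Prec ϑ (x + z) (y + z) ↔ Prec ϑ x y := by
  simp only [Prec, dotZ_add_left, add_lt_add_iff_right, add_left_inj, lexLt_add_right_iff]

lemma LexLt.asymm {x y : Vtx d} (h : LexLt x y) : ¬ LexLt y x := by
  rintro ⟨j, hj, hyx⟩
  obtain ⟨i, hi, hxy⟩ := h
  rcases lt_trichotomy i j with hij | rfl | hji
  · exact hxy.ne (hj i hij).symm
  · exact hxy.not_gt hyx
  · exact hyx.ne (hi j hji).symm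

lemma Prec.asymm {ϑ x y : Vtx d} (h : Prec ϑ x y) : ¬ Prec ϑ y x := by
  rintro (hyx | ⟨hyx, hlex⟩) <;> rcases h with hxy | ⟨hxy, hlex'⟩
  all_goals first | omega | exact hlex'.asymm hlex

end Lattice

section Progenitor
variable {d : ℕ}

def progenitorEvent (ϑ x p : Vtx d) : Set (UConfig d) :=
  {ω | {y | Conn ω x y}.Infinite ∧ Conn ω x p ∧ ∀ y, Conn ω x y → Prec ϑ p y ∨ p = y}

lemma measurableSet_progenitorEvent (ϑ x p : Vtx d) :
    MeasurableSet (progenitorEvent ϑ x p) := by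
  simp only [progenitorEvent, Set.infinite_iff_forall_exists_notMem_finset, Set.mem_ofPred_eq]
  refine measurableSet_setOfPred.mpr <| .and ?_ <| (measurable_conn x p).and ?_
  · exact .forall fun _ => .exists fun y => (measurable_conn x y).and measurable_const
  · exact .forall fun y => (measurable_conn x y).imp measurable_const

lemma preimage_shiftU_progenitorEvent (ϑ x p z : Vtx d) :
    shiftU z ⁻¹' progenitorEvent ϑ x p = progenitorEvent ϑ (x + z) (p + z) := by
  ext ω
  have hcluster : {y | Conn (shiftU z ω) x y} = (· + z) ⁻¹' {y | Conn ω (x + z) y} :=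
    Set.ext fun y => conn_shiftU z ω x y
  refine and_congr ?_ (and_congr (conn_shiftU z ω x p) ?_)
  · rw [hcluster]
    exact not_congr ⟨fun h => h.of_preimage (add_right_surjective z),
      fun h => h.preimage (add_left_injective z).injOn⟩
  · refine Iff.trans ?_ (Equiv.addRight z).forall_congr_right
    simp only [Equiv.coe_addRight, conn_shiftU, prec_add_right_iff, add_left_inj]

lemma pairwise_disjoint_progenitorEvent (ϑ x : Vtx d) :
    Pairwise (Disjoint on progenitorEvent ϑ x) := by
  intro p q hpq
  refine Set.disjoint_left.2 fun ω ⟨_, hxp, hp⟩ ⟨_, hxq, hq⟩ => hpq ?_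
  rcases hp q hxq with hpq' | rfl
  · rcases hq p hxp with hqp | rfl
    · exact absurd hqp hpq'.asymm
    · rfl
  · rfl

lemma progenitorEvent_of_conn {ϑ x y p : Vtx d} {ω : UConfig d}
    (hω : ω ∈ progenitorEvent ϑ x p) (hxy : Conn ω x y) : ω ∈ progenitorEvent ϑ y p := by
  obtain ⟨hinf, hxp, hmin⟩ := hω
  have hcluster : {w | Conn ω y w} = {w | Conn ω x w} :=
    Set.ext fun w => ⟨hxy.trans, hxy.symm.trans⟩
  exact ⟨hcluster ▸ hinf, hxy.symm.trans hxp, fun w hyw => hmin w (hxy.trans hyw)⟩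

theorem measure_progenitorEvent_self (ϑ : Vtx d) (ν : Measure (UConfig d)) [IsFiniteMeasure ν]
    (hinv : ∀ z, MeasurePreserving (shiftU z) ν ν) (p : Vtx d) :
    ν (progenitorEvent ϑ p p) = 0 := by
  have htransport : ∑' x, ν (progenitorEvent ϑ x p) = ∑' q, ν (progenitorEvent ϑ p q) := by
    refine tsum_apply_self_eq_tsum_self_apply (fun x q => ν (progenitorEvent ϑ x q))
      (fun x q z => ?_) p
    rw [← preimage_shiftU_progenitorEvent,
      (hinv z).measure_preimage (measurableSet_progenitorEvent ϑ x q).nullMeasurableSet]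
  have hsummable : ∑' x, ν (progenitorEvent ϑ x p) ≠ ⊤ := by
    rw [htransport, ← measure_iUnion (pairwise_disjoint_progenitorEvent ϑ p)
      (measurableSet_progenitorEvent ϑ p)]
    exact measure_ne_top ν _
  refine measure_mono_null (fun ω hω => ?_) (measure_limsup_cofinite_eq_zero hsummable)
  rw [Filter.mem_limsup_iff_frequently_mem, Filter.frequently_cofinite_iff_infinite]
  exact hω.1.mono fun y hy => progenitorEvent_of_conn hω hy

end Progenitor

theorem stmt10_general (d : ℕ) (ϑ : Vtx d)
    (ν : Measure (UConfig d)) [IsProbabilityMeasure ν]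
    (hinv : ∀ z : Vtx d, MeasurePreserving (shiftU z) ν ν) :
    ∀ᵐ ω ∂ν, ∀ x : Vtx d, {y | Conn ω x y}.Infinite →
      ¬ ∃ p : Vtx d, Conn ω x p ∧ ∀ y : Vtx d, Conn ω x y → (Prec ϑ p y ∨ p = y) := by
  have hnull : ∀ᵐ ω ∂ν, ∀ p, ω ∉ progenitorEvent ϑ p p :=
    ae_all_iff.2 fun p =>
      measure_eq_zero_iff_ae_notMem.1 (measure_progenitorEvent_self ϑ ν hinv p)
  filter_upwards [hnull] with ω hω x hinf ⟨p, hxp, hmin⟩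
  exact hω p (progenitorEvent_of_conn ⟨hinf, hxp, hmin⟩ hxp)

/-- for a translation-invariant probability measure on undirected
nearest-neighbor configurations on `ℤ^d`, almost surely no infinite open cluster has a
`≺`-least element (progenitor). -/
theorem stmt10 (d : ℕ) (hd : 1 ≤ d) (ϑ : Vtx d) (hϑ : ϑ ≠ 0)
    (ν : Measure (UConfig d)) [IsProbabilityMeasure ν]
    (hinv : ∀ z : Vtx d, MeasurePreserving (shiftU z) ν ν) :
    ∀ᵐ ω ∂ν, ∀ x : Vtx d, {y | Conn ω x y}.Infinite →
      ¬ ∃ p : Vtx d, Conn ω x p ∧ ∀ y : Vtx d, Conn ω x y → (Prec ϑ p y ∨ p = y) :=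
  stmt10_general d ϑ ν hinv
end

section
/- Let d ≥ 1 and let t : E^d → [0,∞) be a weight configuration on the nearest-neighbor edges of ℤ^d such that for every n ≥ 1 there exists a self-avoiding geodesic from 0 to n·e₁, that is, a self-avoiding path attaining T(0, n·e₁). Then there exists an infinite geodesic ray from 0: an infinite self-avoiding nearest-neighbor path 0 = γ_0, γ_1, γ_2, … such that for all 0 ≤ j ≤ m, the segment (γ_j, γ_{j+1}, …, γ_m) is a geodesic from γ_j to γ_m (its passage time equals T(γ_j, γ_m)). -/
open Classical

/-- `e` is a nearest-neighbor (unordered) edge of `ℤ^d`. -/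
def IsNNEdge {d : ℕ} (e : Sym2 (Vtx d)) : Prop :=
  ∃ x y : Vtx d, dist1 x y = 1 ∧ e = s(x, y)

/-- Extend a weight function on nearest-neighbor edges to all unordered pairs by `0`. -/
noncomputable def liftW {d : ℕ} (t : {e : Sym2 (Vtx d) // IsNNEdge e} → ℝ)
    (e : Sym2 (Vtx d)) : ℝ :=
  if h : IsNNEdge e then t ⟨e, h⟩ else 0

/-- `p` is a nearest-neighbor path of `n` steps from `x` to `y`. -/
def IsPath {d : ℕ} (n : ℕ) (p : ℕ → Vtx d) (x y : Vtx d) : Prop :=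
  p 0 = x ∧ p n = y ∧ ∀ i : ℕ, i < n → dist1 (p i) (p (i + 1)) = 1

/-- The passage time of the first `n` steps of `p`. -/
def pathTime {d : ℕ} (w : Sym2 (Vtx d) → ℝ) (n : ℕ) (p : ℕ → Vtx d) : ℝ :=
  ∑ i ∈ Finset.range n, w s(p i, p (i + 1))

/-- The (first-)passage time `T(x,y)`. -/
noncomputable def PT {d : ℕ} (w : Sym2 (Vtx d) → ℝ) (x y : Vtx d) : ℝ :=
  sInf {r : ℝ | ∃ (n : ℕ) (p : ℕ → Vtx d), IsPath n p x y ∧ r = pathTime w n p}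

/-- `n·e₁ ∈ ℤ^d`. -/
def nE1 (d : ℕ) (n : ℕ) : Vtx d := fun i => if (i : ℕ) = 0 then (n : ℤ) else 0

/-! A self-avoiding geodesic from `0` to `n·e₁` has at least `n` steps, and its `i`-th vertex lies
in the finite ℓ¹-ball of radius `i`. Along an ultrafilter on `n` each vertex position therefore
stabilises, and the limit path agrees on any initial stretch with geodesics that are longer still.
Since a segment of a geodesic is a geodesic (splice a shorter competitor into the path otherwise)
and self-avoidance is checked on finite stretches, the limit is a self-avoiding geodesic ray. -/

open Filter

theorem exists_forall_frequently_eq {α : Type*} (f : ℕ → ℕ → α) (s : ℕ → Set α)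
    (hs : ∀ i, (s i).Finite) (hf : ∀ i, ∀ᶠ n in atTop, f n i ∈ s i) :
    ∃ γ : ℕ → α, ∀ K, ∃ᶠ n in atTop, ∀ i ≤ K, f n i = γ i := by
  set U := hyperfilter ℕ
  have hU : (U : Filter ℕ) ≤ atTop := Nat.cofinite_eq_atTop ▸ hyperfilter_le_cofinite
  have hstab : ∀ i, ∃ a, ∀ᶠ n in (U : Filter ℕ), f n i = a := fun i => by
    have h : (⋃ a ∈ s i, {n | f n i = a}) ∈ U :=
      mem_of_superset ((hf i).filter_mono hU) fun n hn => Set.mem_biUnion hn rfl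
    obtain ⟨a, -, ha⟩ := (Ultrafilter.finite_biUnion_mem_iff (hs i)).1 h
    exact ⟨a, ha⟩
  choose γ hγ using hstab
  exact ⟨γ, fun K =>
    ((Set.finite_le_nat K).eventually_all.2 fun i _ => hγ i).frequently.filter_mono hU⟩

section

variable {d : ℕ}

lemma dist1_triangle (x y z : Vtx d) : dist1 x z ≤ dist1 x y + dist1 y z := by
  unfold dist1
  rw [← Finset.sum_add_distrib]
  exact Finset.sum_le_sum fun i _ => abs_sub_le _ _ _

lemma finite_setOf_dist1_le (x : Vtx d) (r : ℤ) : {y | dist1 x y ≤ r}.Finite := by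
  refine (Set.Finite.pi' fun i => Set.finite_Icc (x i - r) (x i + r)).subset fun y hy i => ?_
  have hi : |x i - y i| ≤ r :=
    (Finset.single_le_sum (f := fun j => |x j - y j|) (fun _ _ => abs_nonneg _)
      (Finset.mem_univ i)).trans hy
  constructor <;> linarith [abs_le.1 hi]

lemma dist1_zero_nE1 (hd : 1 ≤ d) (n : ℕ) : dist1 (0 : Vtx d) (nE1 d n) = n := by
  unfold dist1 nE1
  rw [Finset.sum_eq_single ⟨0, hd⟩ (fun i _ hi => by simp [Fin.ext_iff] at hi; simp [hi])
    (by simp)]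
  simp

lemma IsPath.dist1_le {n : ℕ} {p : ℕ → Vtx d} {x y : Vtx d} (hp : IsPath n p x y) :
    ∀ i ≤ n, dist1 x (p i) ≤ i := by
  intro i
  induction i with
  | zero => intro _; simp [hp.1, dist1]
  | succ i ih =>
    intro hi
    have := dist1_triangle x (p i) (p (i + 1))
    rw [hp.2.2 i hi] at this
    push_cast
    linarith [ih (by omega)]

lemma IsPath.segment {M : ℕ} {p : ℕ → Vtx d} {x z : Vtx d} (hp : IsPath M p x z)
    {j m : ℕ} (hjm : j ≤ m) (hmM : m ≤ M) :
    IsPath (m - j) (fun i => p (j + i)) (p j) (p m) :=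
  ⟨by simp, by simp [Nat.add_sub_cancel' hjm], fun i hi => hp.2.2 (j + i) (by omega)⟩

def pathAppend {α : Type*} (a : ℕ) (p q : ℕ → α) (i : ℕ) : α :=
  if i < a then p i else q (i - a)

lemma pathAppend_of_le {α : Type*} {a : ℕ} {p q : ℕ → α} (hpq : p a = q 0) {i : ℕ}
    (h : i ≤ a) : pathAppend a p q i = p i := by
  unfold pathAppend
  rcases h.lt_or_eq with h | rfl
  · rw [if_pos h]
  · simp [hpq]

lemma pathAppend_of_ge {α : Type*} {a : ℕ} {p q : ℕ → α} {i : ℕ} (h : a ≤ i) :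
    pathAppend a p q i = q (i - a) :=
  if_neg (by omega)

lemma IsPath.append {a b : ℕ} {p q : ℕ → Vtx d} {x y z : Vtx d}
    (hp : IsPath a p x y) (hq : IsPath b q y z) : IsPath (a + b) (pathAppend a p q) x z := by
  have hpq : p a = q 0 := hp.2.1.trans hq.1.symm
  refine ⟨by rw [pathAppend_of_le hpq a.zero_le, hp.1], ?_, fun i hi => ?_⟩
  · rw [pathAppend_of_ge (Nat.le_add_right a b), Nat.add_sub_cancel_left, hq.2.1]
  · rcases lt_or_ge i a with h | h
    · rw [pathAppend_of_le hpq h.le, pathAppend_of_le hpq h]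
      exact hp.2.2 i h
    · rw [pathAppend_of_ge h, pathAppend_of_ge (by omega), Nat.sub_add_comm h]
      exact hq.2.2 (i - a) (by omega)

lemma pathTime_append (w : Sym2 (Vtx d) → ℝ) {a b : ℕ} {p q : ℕ → Vtx d} (hpq : p a = q 0) :
    pathTime w (a + b) (pathAppend a p q) = pathTime w a p + pathTime w b q := by
  unfold pathTime
  rw [Finset.sum_range_add]
  congr 1
  · refine Finset.sum_congr rfl fun i hi => ?_
    rw [Finset.mem_range] at hi
    rw [pathAppend_of_le hpq hi.le, pathAppend_of_le hpq hi]
  · refine Finset.sum_congr rfl fun i _ => ?_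
    rw [pathAppend_of_ge (Nat.le_add_right a i), pathAppend_of_ge (by omega),
      Nat.add_sub_cancel_left, show a + i + 1 - a = i + 1 by omega]

lemma pathTime_segment (w : Sym2 (Vtx d) → ℝ) (p : ℕ → Vtx d) (j m : ℕ) :
    pathTime w (m - j) (fun i => p (j + i)) = ∑ i ∈ Finset.Ico j m, w s(p i, p (i + 1)) := by
  rw [Finset.sum_Ico_eq_sum_range]
  rfl

variable {w : Sym2 (Vtx d) → ℝ}

lemma PT_le_pathTime (hw : ∀ e, 0 ≤ w e) {n : ℕ} {p : ℕ → Vtx d} {x y : Vtx d}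
    (hp : IsPath n p x y) : PT w x y ≤ pathTime w n p :=
  csInf_le ⟨0, fun _ ⟨_, _, _, hr⟩ => hr ▸ Finset.sum_nonneg fun _ _ => hw _⟩ ⟨n, p, hp, rfl⟩

lemma sum_Ico_eq_PT_of_geodesic (hw : ∀ e, 0 ≤ w e) {M : ℕ} {p : ℕ → Vtx d} {x z : Vtx d}
    (hp : IsPath M p x z) (hgeo : pathTime w M p = PT w x z) {j m : ℕ} (hjm : j ≤ m)
    (hmM : m ≤ M) : ∑ i ∈ Finset.Ico j m, w s(p i, p (i + 1)) = PT w (p j) (p m) := by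
  have hseg := hp.segment hjm hmM
  refine le_antisymm (le_csInf ⟨_, m - j, _, hseg, (pathTime_segment w p j m).symm⟩ ?_)
    (pathTime_segment w p j m ▸ PT_le_pathTime hw hseg)
  rintro _ ⟨k, q, hq, rfl⟩
  have hsuf : IsPath (M - m) (fun i => p (m + i)) (p m) z := hp.2.1 ▸ hp.segment hmM le_rfl
  have hpre : IsPath j p x (p j) := ⟨hp.1, rfl, fun i hi => hp.2.2 i (by omega)⟩
  have hsplice := PT_le_pathTime hw (hpre.append (hq.append hsuf))
  rw [pathTime_append w (hq.append hsuf).1.symm, pathTime_append w (hq.2.1.trans hsuf.1.symm),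
    pathTime_segment w p m M, ← hgeo] at hsplice
  have hsplit : pathTime w M p = pathTime w j p + ((∑ i ∈ Finset.Ico j m, w s(p i, p (i + 1))) +
      ∑ i ∈ Finset.Ico m M, w s(p i, p (i + 1))) := by
    rw [pathTime, pathTime, Finset.sum_Ico_consecutive _ hjm hmM,
      Finset.sum_range_add_sum_Ico _ (hjm.trans hmM)]
  linarith

def IsSelfAvoidingGeodesic (w : Sym2 (Vtx d) → ℝ) (m : ℕ) (p : ℕ → Vtx d) (x y : Vtx d) :
    Prop :=
  IsPath m p x y ∧ (∀ i j : ℕ, i ≤ m → j ≤ m → p i = p j → i = j) ∧ pathTime w m p = PT w x y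

lemma geodesicRay_of_forall_exists_agree (hw : ∀ e, 0 ≤ w e) {x : Vtx d} {γ : ℕ → Vtx d}
    (h : ∀ K, ∃ (m : ℕ) (p : ℕ → Vtx d) (y : Vtx d),
      K ≤ m ∧ IsSelfAvoidingGeodesic w m p x y ∧ ∀ i ≤ K, p i = γ i) :
    γ 0 = x ∧ (∀ i, dist1 (γ i) (γ (i + 1)) = 1) ∧ Function.Injective γ ∧
      ∀ j m, j ≤ m → ∑ i ∈ Finset.Ico j m, w s(γ i, γ (i + 1)) = PT w (γ j) (γ m) := by
  refine ⟨?_, fun i => ?_, fun a b hab => ?_, fun j m hjm => ?_⟩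
  · obtain ⟨m, p, y, -, hp, hpγ⟩ := h 0
    rw [← hpγ 0 le_rfl, hp.1.1]
  · obtain ⟨m, p, y, hm, hp, hpγ⟩ := h (i + 1)
    rw [← hpγ i (by omega), ← hpγ (i + 1) le_rfl]
    exact hp.1.2.2 i (by omega)
  · obtain ⟨m, p, y, hm, hp, hpγ⟩ := h (max a b)
    exact hp.2.1 a b (by omega) (by omega)
      (by rw [hpγ a (le_max_left a b), hpγ b (le_max_right a b), hab])
  · obtain ⟨M, p, y, hM, hp, hpγ⟩ := h m
    rw [← hpγ j hjm, ← hpγ m le_rfl, ← sum_Ico_eq_PT_of_geodesic hw hp.1 hp.2.2 hjm hM]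
    refine Finset.sum_congr rfl fun i hi => ?_
    rw [Finset.mem_Ico] at hi
    rw [hpγ i (by omega), hpγ (i + 1) (by omega)]

lemma liftW_nonneg {t : {e : Sym2 (Vtx d) // IsNNEdge e} → ℝ} (hnn : ∀ e, 0 ≤ t e)
    (e : Sym2 (Vtx d)) : 0 ≤ liftW t e := by
  unfold liftW
  split
  · exact hnn _
  · exact le_rfl

end

/-- if for every `n ≥ 1` there is a self-avoiding geodesic from `0` to
`n·e₁`, then there is an infinite self-avoiding geodesic ray from `0`: all of its finite
segments are geodesics between their endpoints. -/
theorem stmt16 (d : ℕ) (hd : 1 ≤ d)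
    (t : {e : Sym2 (Vtx d) // IsNNEdge e} → ℝ) (hnn : ∀ e, 0 ≤ t e)
    (hgeo : ∀ n : ℕ, 1 ≤ n → ∃ (m : ℕ) (p : ℕ → Vtx d),
      IsPath m p 0 (nE1 d n) ∧
      (∀ i j : ℕ, i ≤ m → j ≤ m → p i = p j → i = j) ∧
      pathTime (liftW t) m p = PT (liftW t) 0 (nE1 d n)) :
    ∃ γ : ℕ → Vtx d, γ 0 = 0 ∧ (∀ i : ℕ, dist1 (γ i) (γ (i + 1)) = 1) ∧
      Function.Injective γ ∧
      ∀ j m : ℕ, j ≤ m →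
        (∑ i ∈ Finset.Ico j m, liftW t s(γ i, γ (i + 1))) = PT (liftW t) (γ j) (γ m) := by
  choose M P hP using fun n : ℕ => hgeo (n + 1) n.succ_pos
  have hM : ∀ n, n < M n := fun n => by
    have h := (hP n).1.dist1_le (M n) le_rfl
    rw [(hP n).1.2.1, dist1_zero_nE1 hd] at h
    omega
  obtain ⟨γ, hγ⟩ := exists_forall_frequently_eq P (fun i => {v | dist1 0 v ≤ i})
    (fun i => finite_setOf_dist1_le 0 i)
    (fun i => eventually_atTop.2 ⟨i, fun n hn => (hP n).1.dist1_le i (by linarith [hM n])⟩)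
  refine ⟨γ, geodesicRay_of_forall_exists_agree (liftW_nonneg hnn) fun K => ?_⟩
  obtain ⟨n, hn, hPγ⟩ := frequently_atTop.1 (hγ K) K
  exact ⟨M n, P n, _, by linarith [hM n], hP n, hPγ⟩
end
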